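/- arXiv:2605.30643 — 3 statements merged into one kernel-verified Lean document; each statement's English description precedes it below -/
import Mathlib

section
/- Let f(δ) = 1/(1 + exp(α + βδ)) with β > 0 and Λ(δ) = λ f(δ) with λ > 0. For each p ∈ ℝ, the maximizer of δ ↦ Λ(δ)(δ - p) is δ*(p) = p + (1 + x(p))/β, where x(p) = W₀(exp(-α - βp - 1)) and W₀ is the principal branch of the Lambert W function. -/
/-! Substituting `t = β (δ - p)` and `a = α + β p`, the objective is `(λ/β) · t / (1 + e^{a+t})`.
If `x e^{a+1+x} = 1` (which is what `x = W₀(e^{-a-1})` says), then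
`x e^{a+t} = e^{t-1-x} ≥ t - x`, i.e. `t ≤ x (1 + e^{a+t})`, with equality at `t = 1 + x`.
So the objective is at most `λ x / β`, attained at `δ = p + (1 + x)/β`; there
`e^{α+βδ} = 1/x`, which also makes the first-order condition vanish. -/

open Real

lemma mul_exp_add_one_add_eq_one {x a : ℝ} (hx : x * exp x = exp (-a - 1)) :
    x * exp (a + 1 + x) = 1 := by
  rw [add_comm, exp_add, ← mul_assoc, hx, ← exp_add]
  ring_nf
  exact exp_zero

lemma le_mul_one_add_exp {x a : ℝ} (hx : x * exp (a + 1 + x) = 1) (t : ℝ) :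
    t ≤ x * (1 + exp (a + t)) := by
  have hxe : x * exp (a + t) = exp (t - 1 - x) :=
    calc x * exp (a + t) = x * exp (a + 1 + x) * exp (t - 1 - x) := by
          rw [mul_assoc, ← exp_add]; ring_nf
      _ = exp (t - 1 - x) := by rw [hx, one_mul]
  nlinarith [add_one_le_exp (t - 1 - x)]

lemma logistic_objective_le {α β lam p x : ℝ} (hβ : 0 < β) (hlam : 0 ≤ lam)
    (hx : x * exp (α + β * p + 1 + x) = 1) (δ : ℝ) :
    lam / (1 + exp (α + β * δ)) * (δ - p) ≤ lam * x / β := by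
  have hbound := le_mul_one_add_exp hx (β * (δ - p))
  rw [show α + β * p + β * (δ - p) = α + β * δ by ring] at hbound
  rw [div_mul_eq_mul_div, div_le_div_iff₀ (by positivity) hβ]
  nlinarith

lemma logistic_objective_eq_of_mul_exp_eq_one {α β lam p x δ : ℝ} (hβ : 0 < β)
    (hx : x * exp (α + β * δ) = 1) (hδ : β * (δ - p) = 1 + x) :
    lam / (1 + exp (α + β * δ)) * (δ - p) = lam * x / β := by
  have hx0 : 0 < x := (pos_iff_pos_of_mul_pos (hx ▸ one_pos)).mpr (exp_pos _)
  rw [eq_div_of_mul_eq hx0.ne' ((mul_comm _ _).trans hx),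
    eq_div_of_mul_eq hβ.ne' ((mul_comm _ _).trans hδ)]
  field_simp
  ring

lemma hasDerivAt_logistic (α β lam δ : ℝ) :
    HasDerivAt (fun δ => lam / (1 + exp (α + β * δ)))
      (-(lam * (exp (α + β * δ) * β)) / (1 + exp (α + β * δ)) ^ 2) δ := by
  have hinner : HasDerivAt (fun δ => 1 + exp (α + β * δ)) (exp (α + β * δ) * β) δ := by
    simpa using (((hasDerivAt_id δ).const_mul β).const_add α).exp.const_add 1
  have h : HasDerivAt (fun δ => lam / (1 + exp (α + β * δ))) _ δ :=
    (hasDerivAt_const δ lam).div hinner (by positivity)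
  simpa using h

lemma logistic_first_order_of_mul_exp_eq_one {α β lam p x δ : ℝ}
    (hx : x * exp (α + β * δ) = 1) (hδ : β * (δ - p) = 1 + x) :
    deriv (fun δ => lam / (1 + exp (α + β * δ))) δ * (δ - p)
      + lam / (1 + exp (α + β * δ)) = 0 := by
  rw [(hasDerivAt_logistic α β lam δ).deriv]
  have hpos : 0 < 1 + exp (α + β * δ) := by positivity
  generalize exp (α + β * δ) = E at hx hpos ⊢
  field_simp
  linear_combination (-lam) * hx - lam * E * hδ

/-- Closed-form quote for the logistic fill curve: with `Λ(δ) = λ/(1 + exp(α + βδ))`,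
the maximizer of `δ ↦ Λ(δ)(δ - p)` is `δ*(p) = p + (1 + x(p))/β`, where
`x(p) = W₀(exp(-α - βp - 1))` and `W₀` is the principal Lambert W branch
(characterized by `W₀(y) e^{W₀(y)} = y`, `W₀(y) ≥ 0` for `y ≥ 0`).  The maximizer
satisfies the first-order condition and achieves the supremum. -/
theorem logistic_optimal_quote (α β lam : ℝ) (hβ : 0 < β) (hlam : 0 < lam)
    (W0 : ℝ → ℝ)
    (hW0 : ∀ y, 0 ≤ y → W0 y * Real.exp (W0 y) = y ∧ 0 ≤ W0 y)
    (p : ℝ) :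
    let Λ : ℝ → ℝ := fun δ => lam / (1 + Real.exp (α + β * δ))
    let x : ℝ := W0 (Real.exp (-α - β * p - 1))
    let δs : ℝ := p + (1 + x) / β
    (∀ δ, Λ δ * (δ - p) ≤ Λ δs * (δs - p)) ∧
      deriv Λ δs * (δs - p) + Λ δs = 0 := by
  intro Λ x δs
  have hx : x * exp (α + β * p + 1 + x) = 1 :=
    mul_exp_add_one_add_eq_one <| by
      rw [neg_add, ← sub_eq_add_neg]; exact (hW0 _ (exp_pos _).le).1
  have hδs : β * (δs - p) = 1 + x := by
    rw [add_sub_cancel_left, mul_div_cancel₀ _ hβ.ne']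
  have hxs : x * exp (α + β * δs) = 1 := by
    rwa [show α + β * δs = α + β * p + 1 + x by linear_combination hδs]
  refine ⟨fun δ => ?_, logistic_first_order_of_mul_exp_eq_one hxs hδs⟩
  rw [logistic_objective_eq_of_mul_exp_eq_one hβ hxs hδs]
  exact logistic_objective_le hβ hlam.le hx δ
end

section
/- With the logistic fill curve Λ(δ) = λ/(1 + exp(α + βδ)), β, λ > 0, define x(p) = W₀(exp(-α - βp - 1)). Then the Hamiltonian H(p) = sup_δ Λ(δ)(δ - p) satisfies H(p) = (λ/β) x(p), H'(p) = -λ x(p)/(1 + x(p)), and H''(p) = λβ x(p)/(1 + x(p))³; in particular H'' > 0 everywhere. -/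
/-!
The profit `Λ(δ)(δ - p)` is maximised where `β(δ - p) = 1 + x`, with `x e^x = e^{-α-βp-1}`;
the bound `Λ(δ)(δ - p) ≤ (λ/β) x` reduces to `e^t ≥ 1 + t`, so `H = (λ/β) x`.
Differentiating `x e^x = e^{-α-βp-1}` implicitly gives `x' = -β x / (1 + x)`, from which
`H'` and `H''` follow by the chain and quotient rules.
-/

open Real Set

/-- `W` agrees with the principal branch `W₀` of the Lambert function on `[0, ∞)`. -/
def IsLambertWOnNonneg (W : ℝ → ℝ) : Prop :=
  ∀ y, 0 ≤ y → W y * exp (W y) = y ∧ 0 ≤ W y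

theorem strictMonoOn_mul_exp : StrictMonoOn (fun t : ℝ => t * exp t) (Ici 0) :=
  fun _ ha _ _ hab => mul_lt_mul'' hab (exp_lt_exp.mpr hab) ha (exp_pos _).le

namespace IsLambertWOnNonneg

variable {W : ℝ → ℝ}

theorem pos (hW : IsLambertWOnNonneg W) {y : ℝ} (hy : 0 < y) : 0 < W y := by
  obtain ⟨hWy, hnonneg⟩ := hW y hy.le
  refine hnonneg.lt_of_ne fun h => ?_
  rw [← h, zero_mul] at hWy
  exact hy.ne hWy

theorem apply_mul_exp (hW : IsLambertWOnNonneg W) {t : ℝ} (ht : 0 ≤ t) :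
    W (t * exp t) = t := by
  have hy : 0 ≤ t * exp t := by positivity
  exact strictMonoOn_mul_exp.injOn (hW _ hy).2 ht (hW _ hy).1

theorem monotoneOn (hW : IsLambertWOnNonneg W) : MonotoneOn W (Ici 0) := fun a ha b hb hab => by
  rw [← strictMonoOn_mul_exp.le_iff_le (hW a ha).2 (hW b hb).2]
  simpa only [(hW a ha).1, (hW b hb).1] using hab

theorem image_Ioi (hW : IsLambertWOnNonneg W) : W '' Ioi 0 = Ioi 0 := by
  refine Subset.antisymm (image_subset_iff.mpr fun y hy => hW.pos hy) fun t ht => ?_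
  exact ⟨t * exp t, mul_pos ht (exp_pos t), hW.apply_mul_exp (le_of_lt ht)⟩

theorem continuousAt (hW : IsLambertWOnNonneg W) {y : ℝ} (hy : 0 < y) : ContinuousAt W y := by
  refine continuousAt_of_monotoneOn_of_image_mem_nhds (hW.monotoneOn.mono Ioi_subset_Ici_self)
    (Ioi_mem_nhds hy) ?_
  rw [hW.image_Ioi]
  exact Ioi_mem_nhds (hW.pos hy)

theorem hasDerivAt (hW : IsLambertWOnNonneg W) {y : ℝ} (hy : 0 < y) :
    HasDerivAt W ((1 + W y) * exp (W y))⁻¹ y := by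
  have hmulexp : HasDerivAt (fun t => t * exp t) ((1 + W y) * exp (W y)) (W y) :=
    ((hasDerivAt_id' (W y)).mul (hasDerivAt_exp (W y))).congr_deriv (by ring)
  have hWy := hW.pos hy
  refine hmulexp.of_local_left_inverse (hW.continuousAt hy) (by positivity) ?_
  filter_upwards [Ioi_mem_nhds hy] with z hz using (hW z (le_of_lt hz)).1

theorem hasDerivAt_comp_exp (hW : IsLambertWOnNonneg W) {f : ℝ → ℝ} {f' p : ℝ}
    (hf : HasDerivAt f f' p) :
    HasDerivAt (fun q => W (exp (f q))) (W (exp (f p)) / (1 + W (exp (f p))) * f') p := by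
  have hy := exp_pos (f p)
  have hWy := hW.pos hy
  obtain ⟨hwe, -⟩ := hW _ hy.le
  refine ((hW.hasDerivAt hy).comp p hf.exp).congr_deriv ?_
  generalize W (exp (f p)) = w at hWy hwe ⊢
  rw [← hwe]
  field_simp

end IsLambertWOnNonneg

theorem div_one_add_exp_le {c w : ℝ} (hwc : w * exp w = exp (-c - 1)) (u : ℝ) :
    u / (1 + exp (c + u)) ≤ w := by
  have hshift : w * exp (c + u) = exp (u - 1 - w) :=
    calc w * exp (c + u) = w * exp w * exp (c + u - w) := by
          rw [mul_assoc, ← exp_add, add_sub_cancel]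
      _ = exp (u - 1 - w) := by rw [hwc, ← exp_add]; congr 1; ring
  have htangent : u - w ≤ exp (u - 1 - w) := by linarith [add_one_le_exp (u - 1 - w)]
  rw [div_le_iff₀ (by positivity)]
  linarith

theorem div_one_add_exp_eq {c w : ℝ} (hw : 0 < w) (hwc : w * exp w = exp (-c - 1)) :
    (1 + w) / (1 + exp (c + (1 + w))) = w := by
  have hexp : exp (c + (1 + w)) = w⁻¹ := by
    refine eq_inv_of_mul_eq_one_left ?_
    calc exp (c + (1 + w)) * w = w * exp w * exp (c + 1) := by
          rw [mul_assoc, ← exp_add, mul_comm]; congr 2; ring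
      _ = 1 := by rw [hwc, ← exp_add, show -c - 1 + (c + 1) = 0 by ring, exp_zero]
  rw [hexp, div_eq_iff (by positivity)]
  field_simp
  ring

theorem logistic_iSup {α β lam p w : ℝ} (hβ : 0 < β) (hlam : 0 ≤ lam) (hw : 0 < w)
    (hwe : w * exp w = exp (-α - β * p - 1)) :
    ⨆ δ : ℝ, lam / (1 + exp (α + β * δ)) * (δ - p) = lam / β * w := by
  have hwc : w * exp w = exp (-(α + β * p) - 1) := by rw [hwe]; ring_nf
  have hprofit : ∀ δ, lam / (1 + exp (α + β * δ)) * (δ - p) =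
      lam / β * (β * (δ - p) / (1 + exp (α + β * p + β * (δ - p)))) := fun δ => by
    rw [show α + β * p + β * (δ - p) = α + β * δ by ring]
    field_simp
  have hle : ∀ δ, lam / (1 + exp (α + β * δ)) * (δ - p) ≤ lam / β * w := fun δ => by
    rw [hprofit]
    exact mul_le_mul_of_nonneg_left (div_one_add_exp_le hwc _) (by positivity)
  have hattained : lam / (1 + exp (α + β * (p + (1 + w) / β))) * (p + (1 + w) / β - p)
      = lam / β * w := by
    rw [hprofit, show β * (p + (1 + w) / β - p) = 1 + w by field_simp; ring,
      div_one_add_exp_eq hw hwc]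
  exact ciSup_eq_of_forall_le_of_forall_lt_exists_gt hle
    fun _ h => ⟨p + (1 + w) / β, hattained ▸ h⟩

/-- Hamiltonian derivatives for the logistic fill curve: with
`Λ(δ) = λ/(1 + exp(α + βδ))` and `x(p) = W₀(exp(-α - βp - 1))`, the Hamiltonian
`H(p) = sup_δ Λ(δ)(δ - p)` satisfies `H(p) = (λ/β) x(p)`,
`H'(p) = -λ x(p)/(1 + x(p))`, `H''(p) = λβ x(p)/(1 + x(p))³`, and `H'' > 0`. -/
theorem logistic_hamiltonian_derivs (α β lam : ℝ) (hβ : 0 < β) (hlam : 0 < lam)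
    (W0 : ℝ → ℝ)
    (hW0 : ∀ y, 0 ≤ y → W0 y * Real.exp (W0 y) = y ∧ 0 ≤ W0 y) :
    let Λ : ℝ → ℝ := fun δ => lam / (1 + Real.exp (α + β * δ))
    let x : ℝ → ℝ := fun p => W0 (Real.exp (-α - β * p - 1))
    let H : ℝ → ℝ := fun p => ⨆ δ : ℝ, Λ δ * (δ - p)
    ∀ p : ℝ,
      H p = (lam / β) * x p ∧
      deriv H p = -lam * x p / (1 + x p) ∧
      deriv (deriv H) p = lam * β * x p / (1 + x p) ^ 3 ∧
      0 < deriv (deriv H) p := by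
  intro Λ x H p
  have hW : IsLambertWOnNonneg W0 := hW0
  have hx_pos : ∀ q, 0 < x q := fun q => hW.pos (exp_pos _)
  have hH : H = fun q => lam / β * x q :=
    funext fun q => logistic_iSup hβ hlam.le (hx_pos q) (hW _ (exp_pos _).le).1
  have hx : ∀ q, HasDerivAt x (x q / (1 + x q) * -β) q := fun q =>
    hW.hasDerivAt_comp_exp (((hasDerivAt_id q).const_mul β).const_sub (-α) |>.sub_const 1
      |>.congr_deriv (by ring))
  have hH' : deriv H = fun q => -lam * x q / (1 + x q) := funext fun q => by
    have := hx_pos q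
    rw [hH, ((hx q).const_mul (lam / β)).deriv]
    field_simp
  have hH'' : deriv (deriv H) p = lam * β * x p / (1 + x p) ^ 3 := by
    have := hx_pos p
    have hquot : HasDerivAt (fun q => -lam * x q / (1 + x q)) _ p :=
      ((hx p).const_mul (-lam)).div ((hx p).const_add 1) (by positivity)
    rw [hH', hquot.deriv]
    field_simp
    ring
  exact ⟨congrFun hH p, congrFun hH' p, hH'', hH'' ▸ by have := hx_pos p; positivity⟩
end

section
/- Let Λ(δ) = λ/(1 + exp(α + βδ)) with λ, β > 0. For each p, the map δ ↦ Λ(δ)(δ - p) attains its supremum on ℝ at a unique point, and the supremum H(p) is finite and strictly positive. -/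
/-!
Writing `u = α + βδ`, the derivative of `F(δ) = Λ(δ)(δ - p)` is
`λ eᵘ/(1 + eᵘ)² · (e⁻ᵘ + 1 - β(δ - p))`. The second factor is strictly decreasing in `δ`,
positive at `δ = p` and tends to `-∞`, so it changes sign exactly once, at some `δ*`.
Hence `F` strictly increases up to `δ*` and strictly decreases after it, and
`F(δ*) > F(p + 1) > 0`.
-/

open Real Set Filter

theorem apply_lt_apply_of_deriv_sign_change {f : ℝ → ℝ} {c x : ℝ} (hf : Continuous f)
    (hleft : ∀ y < c, 0 < deriv f y) (hright : ∀ y, c < y → deriv f y < 0) (hx : x ≠ c) :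
    f x < f c := by
  rcases hx.lt_or_gt with hxc | hcx
  · refine strictMonoOn_of_deriv_pos (convex_Iic c) hf.continuousOn ?_ hxc.le (mem_Iic.2 le_rfl) hxc
    rw [interior_Iic]
    exact hleft
  · refine strictAntiOn_of_deriv_neg (convex_Ici c) hf.continuousOn ?_ (mem_Ici.2 le_rfl) hcx.le hcx
    rw [interior_Ici]
    exact hright

theorem StrictAnti.exists_sign_change {g : ℝ → ℝ} (hg : StrictAnti g) (hgc : Continuous g)
    {a b : ℝ} (ha : 0 < g a) (hb : g b < 0) :
    ∃ c, (∀ y < c, 0 < g y) ∧ ∀ y, c < y → g y < 0 := by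
  obtain ⟨c, hc⟩ := intermediate_value_univ b a hgc ⟨hb.le, ha.le⟩
  exact ⟨c, fun y hy => hc ▸ hg hy, fun y hy => hc ▸ hg hy⟩

namespace Logistic

noncomputable def derivSignFactor (α β p δ : ℝ) : ℝ :=
  exp (-(α + β * δ)) + 1 - β * (δ - p)

variable {α β : ℝ} (p : ℝ)

theorem hasDerivAt_objective (lam δ : ℝ) :
    HasDerivAt (fun δ => lam / (1 + exp (α + β * δ)) * (δ - p))
      (lam * exp (α + β * δ) / (1 + exp (α + β * δ)) ^ 2 * derivSignFactor α β p δ) δ := by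
  have hD : 1 + exp (α + β * δ) ≠ 0 := by positivity
  have hE : HasDerivAt (fun δ => 1 + exp (α + β * δ)) (exp (α + β * δ) * β) δ := by
    simpa using (((hasDerivAt_id δ).const_mul β).const_add α).exp.const_add 1
  refine (((hasDerivAt_const δ lam).div hE hD).mul ((hasDerivAt_id δ).sub_const p)).congr_deriv ?_
  simp only [derivSignFactor, Pi.div_apply, id, exp_neg]
  field_simp
  ring

theorem continuous_derivSignFactor : Continuous (derivSignFactor α β p) := by
  unfold derivSignFactor
  fun_prop

theorem strictAnti_derivSignFactor (hβ : 0 < β) : StrictAnti (derivSignFactor α β p) := by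
  have hexp : StrictAnti fun δ => exp (-(α + β * δ)) :=
    exp_strictMono.comp_strictAnti fun x y hxy => by nlinarith
  have hlin : StrictAnti fun δ => 1 - β * (δ - p) := fun x y hxy => by nlinarith
  convert hexp.add hlin using 1
  funext δ
  exact add_sub_assoc _ _ _

theorem tendsto_derivSignFactor_atTop (hβ : 0 < β) :
    Tendsto (derivSignFactor α β p) atTop atBot := by
  have hlin : Tendsto (fun δ => α + β * δ) atTop atTop :=
    tendsto_atTop_add_const_left _ α (tendsto_id.const_mul_atTop hβ)
  have hexp : Tendsto (fun δ => exp (-(α + β * δ))) atTop (nhds 0) :=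
    tendsto_exp_atBot.comp (tendsto_neg_atTop_atBot.comp hlin)
  have hneg : Tendsto (fun δ => 1 + β * p + α - (α + β * δ)) atTop atBot :=
    tendsto_atBot_add_const_left _ _ (tendsto_neg_atTop_atBot.comp hlin)
  refine (hexp.add_atBot hneg).congr fun δ => ?_
  simp only [derivSignFactor]
  ring

theorem exists_derivSignFactor_sign_change (hβ : 0 < β) :
    ∃ c, (∀ δ < c, 0 < derivSignFactor α β p δ) ∧ ∀ δ, c < δ → derivSignFactor α β p δ < 0 := by
  obtain ⟨b, hb⟩ := ((tendsto_derivSignFactor_atTop (α := α) p hβ).eventually_lt_atBot 0).exists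
  have hp : 0 < derivSignFactor α β p p := by
    simp only [derivSignFactor, sub_self, mul_zero, sub_zero]
    positivity
  exact (strictAnti_derivSignFactor p hβ).exists_sign_change (continuous_derivSignFactor p) hp hb

end Logistic

/-- For the logistic fill intensity `Λ(δ) = λ/(1 + exp(α + βδ))` with `λ, β > 0`
and any `p`, the map `δ ↦ Λ(δ)(δ - p)` attains its supremum on `ℝ` at a unique
point, and the attained supremum is strictly positive (in particular finite). -/
theorem logistic_objective_unique_max (α β lam p : ℝ) (hβ : 0 < β) (hlam : 0 < lam) :
    let Λ : ℝ → ℝ := fun δ => lam / (1 + Real.exp (α + β * δ))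
    ∃ δs : ℝ,
      (∀ δ, Λ δ * (δ - p) ≤ Λ δs * (δs - p)) ∧
      (∀ δ', (∀ δ, Λ δ * (δ - p) ≤ Λ δ' * (δ' - p)) → δ' = δs) ∧
      0 < Λ δs * (δs - p) := by
  intro Λ
  obtain ⟨δs, hleft, hright⟩ := Logistic.exists_derivSignFactor_sign_change (α := α) p hβ
  have hF := Logistic.hasDerivAt_objective (α := α) (β := β) p lam
  have hweight (δ : ℝ) : 0 < lam * exp (α + β * δ) / (1 + exp (α + β * δ)) ^ 2 := by positivity
  have hmax (δ : ℝ) (hδ : δ ≠ δs) : Λ δ * (δ - p) < Λ δs * (δs - p) :=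
    apply_lt_apply_of_deriv_sign_change (continuous_iff_continuousAt.2 fun x => (hF x).continuousAt)
      (fun y hy => (hF y).deriv ▸ mul_pos (hweight y) (hleft y hy))
      (fun y hy => (hF y).deriv ▸ mul_neg_of_pos_of_neg (hweight y) (hright y hy)) hδ
  have hle (δ : ℝ) : Λ δ * (δ - p) ≤ Λ δs * (δs - p) := by
    rcases eq_or_ne δ δs with rfl | hδ
    exacts [le_rfl, (hmax δ hδ).le]
  refine ⟨δs, hle, fun δ' hδ' => ?_, ?_⟩
  · by_contra hne
    exact (hmax δ' hne).not_ge (hδ' δs)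
  · calc 0 < Λ (p + 1) * (p + 1 - p) := by simp only [Λ, add_sub_cancel_left]; positivity
      _ ≤ Λ δs * (δs - p) := hle _
end
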